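/- The momentum half-step map of the variable-mass leapfrog integrator, u ↦ (u + (sinh δ + (e·u)(cosh δ − 1)) e) / (cosh δ + (e·u) sinh δ), maps the unit sphere S^{d−1} to itself for every unit vector e ∈ ℝ^d and every δ ∈ ℝ, provided cosh δ + (e·u) sinh δ > 0. -/
import Mathlib


open scoped RealInnerProductSpace

/-- The momentum half-step map of the variable-mass leapfrog integrator,
`u ↦ (u + (sinh δ + (e·u)(cosh δ − 1)) e) / (cosh δ + (e·u) sinh δ)`,
maps the unit sphere to itself (the denominator being positive). -/
theorem stmt5 (d : ℕ) (u e : EuclideanSpace ℝ (Fin d))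
    (hu : ‖u‖ = 1) (he : ‖e‖ = 1) (δ : ℝ)
    (hpos : 0 < Real.cosh δ + ⟪e, u⟫ * Real.sinh δ) :
    ‖(Real.cosh δ + ⟪e, u⟫ * Real.sinh δ)⁻¹ •
      (u + (Real.sinh δ + ⟪e, u⟫ * (Real.cosh δ - 1)) • e)‖ = 1 := by
  set t := ⟪e, u⟫ with ht
  set c := Real.sinh δ + t * (Real.cosh δ - 1) with hc
  set a := Real.cosh δ + t * Real.sinh δ with ha
  have hw : ‖u + c • e‖ = a := by
    have hsq : ‖u + c • e‖ ^ 2 = a ^ 2 := by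
      rw [@norm_add_sq_real]
      rw [real_inner_smul_right, norm_smul, real_inner_comm]
      rw [hu, he, ← ht]
      have h1 : Real.cosh δ ^ 2 - Real.sinh δ ^ 2 = 1 := Real.cosh_sq_sub_sinh_sq δ
      have h2 : t ^ 2 ≤ 1 := by
        have := abs_real_inner_le_norm e u
        rw [hu, he] at this
        nlinarith [abs_nonneg t, sq_abs t, this]
      rw [Real.norm_eq_abs, mul_one, sq_abs, ha, hc]
      ring_nf
      nlinarith [h1]
    nlinarith [norm_nonneg (u + c • e), hpos, hsq, sq_nonneg (‖u + c • e‖ - a)]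
  rw [norm_smul, hw, Real.norm_eq_abs, abs_inv, abs_of_pos hpos, inv_mul_cancel₀ hpos.ne']
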